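/- arXiv:2404.01452 — 3 statements merged into one kernel-verified Lean document; each statement's English description precedes it below -/
import Mathlib

section
/- Let $2 \le q \le n$ and let $\mathcal{H}$ be a maximal $q$-uniform linear hypergraph on an $n$-element vertex set. Then $|\mathcal{H}| \ge \frac{n(n-q+1)}{q(q-1)^2}$ (as real numbers). -/
/-- Core Turán-type bound: if `G` is a family of 2-subsets of `S` such that every
`q`-subset of `S` contains a member of `G`, then
`|S| * (|S| - q + 1) ≤ 2 * (q-1) * |G|`. -/
lemma core_bound {α : Type*} [DecidableEq α] (q : ℕ) (hq : 2 ≤ q) :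
    ∀ (S : Finset α) (G : Finset (Finset α)),
      (∀ e ∈ G, e ⊆ S ∧ e.card = 2) →
      (∀ T ⊆ S, T.card = q → ∃ e ∈ G, e ⊆ T) →
      (S.card : ℤ) * ((S.card : ℤ) - q + 1) ≤ 2 * ((q : ℤ) - 1) * G.card := by
  intro S
  induction S using Finset.strongInduction with
  | _ S IH =>
    intro G hG hcov
    rcases S.eq_empty_or_nonempty with rfl | hSne
    · simp only [Finset.card_empty, Nat.cast_zero, zero_mul]
      have hq' : (2:ℤ) ≤ (q:ℤ) := by exact_mod_cast hq
      have hg : (0:ℤ) ≤ (G.card : ℤ) := Int.ofNat_nonneg _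
      nlinarith
    -- Take a maximum-cardinality independent set I ⊆ S.
    set F : Finset (Finset α) :=
      S.powerset.filter (fun I => ∀ e ∈ G, ¬ e ⊆ I) with hF
    have hFne : F.Nonempty := by
      refine ⟨∅, ?_⟩
      simp only [hF, Finset.mem_filter, Finset.mem_powerset]
      refine ⟨Finset.empty_subset _, fun e he hsub => ?_⟩
      have := (hG e he).2
      rw [Finset.subset_empty.mp hsub] at this
      simp at this
    obtain ⟨I, hIF, hImax⟩ := F.exists_max_image Finset.card hFne
    have hIS : I ⊆ S := Finset.mem_powerset.mp (Finset.mem_filter.mp hIF).1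
    have hInd : ∀ e ∈ G, ¬ e ⊆ I := (Finset.mem_filter.mp hIF).2
    -- every vertex outside I creates an edge into insert v I
    have hout : ∀ v ∈ S, v ∉ I → ∃ e ∈ G, e ⊆ insert v I := by
      intro v hvS hvI
      by_contra hcon
      push_neg at hcon
      have hmem : insert v I ∈ F := by
        simp only [hF, Finset.mem_filter, Finset.mem_powerset]
        exact ⟨Finset.insert_subset hvS hIS, hcon⟩
      have := hImax _ hmem
      rw [Finset.card_insert_of_notMem hvI] at this
      omega
    -- |I| ≤ q - 1
    have hIcard : I.card ≤ q - 1 := by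
      by_contra hcon
      push_neg at hcon
      have hqI : q ≤ I.card := by omega
      obtain ⟨T, hTI, hTcard⟩ := Finset.exists_subset_card_eq hqI
      obtain ⟨e, heG, heT⟩ := hcov T (hTI.trans hIS) hTcard
      exact hInd e heG (heT.trans hTI)
    -- I is nonempty
    have hIne : I.Nonempty := by
      rcases I.eq_empty_or_nonempty with rfl | h
      · obtain ⟨v, hv⟩ := hSne
        obtain ⟨e, heG, hesub⟩ := hout v hv (Finset.notMem_empty v)
        have h2 := (hG e heG).2
        have : e.card ≤ ({v} : Finset α).card := by
          apply Finset.card_le_card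
          simpa using hesub
        simp [h2] at this
      · exact h
    set S' := S \ I with hS'
    set G' := G.filter (fun e => e ⊆ S') with hG'
    set G'' := G.filter (fun e => ¬ e ⊆ S') with hG''
    -- choice of an edge for each v ∈ S \ I
    classical
    set f : α → Finset α := fun v =>
      if h : ∃ e ∈ G, v ∈ e ∧ e ⊆ insert v I then h.choose else ∅ with hf
    have hfspec : ∀ v ∈ S', f v ∈ G ∧ v ∈ f v ∧ f v ⊆ insert v I := by
      intro v hv
      rw [hS', Finset.mem_sdiff] at hv
      obtain ⟨e, heG, hesub⟩ := hout v hv.1 hv.2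
      have hve : v ∈ e := by
        by_contra hve
        exact hInd e heG (fun x hx => by
          rcases Finset.mem_insert.mp (hesub hx) with rfl | h
          · exact absurd hx hve
          · exact h)
      have hex : ∃ e ∈ G, v ∈ e ∧ e ⊆ insert v I := ⟨e, heG, hve, hesub⟩
      rw [hf]
      simp only [dif_pos hex]
      obtain ⟨h1, h2, h3⟩ := hex.choose_spec
      exact ⟨h1, h2, h3⟩
    have hfmem : ∀ v ∈ S', f v ∈ G'' := by
      intro v hv
      obtain ⟨h1, h2, h3⟩ := hfspec v hv
      rw [hG'', Finset.mem_filter]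
      refine ⟨h1, fun hsub => ?_⟩
      have hcard2 : (f v).card = 2 := (hG _ h1).2
      obtain ⟨u, hu, huv⟩ : ∃ u ∈ f v, u ≠ v := by
        apply Finset.exists_mem_ne
        · omega
      have huI : u ∈ I := by
        rcases Finset.mem_insert.mp (h3 hu) with rfl | h
        · exact absurd rfl huv
        · exact h
      have := hsub hu
      rw [hS', Finset.mem_sdiff] at this
      exact this.2 huI
    have hinj : Set.InjOn f S' := by
      intro v hv w hw hvw
      by_contra hne
      obtain ⟨_, hv2, hv3⟩ := hfspec v hv
      obtain ⟨_, hw2, hw3⟩ := hfspec w hw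
      rw [← hvw] at hw2
      rcases Finset.mem_insert.mp (hv3 hw2) with h | h
      · exact hne h.symm
      · rw [Finset.mem_coe, hS', Finset.mem_sdiff] at hw
        exact hw.2 h
    have hcard1 : S'.card ≤ G''.card :=
      Finset.card_le_card_of_injOn f hfmem hinj
    have hsplit : G'.card + G''.card = G.card := by
      rw [hG', hG'']
      exact Finset.card_filter_add_card_filter_not _
    -- apply induction hypothesis to S' and G'
    have hss : S' ⊂ S := Finset.sdiff_ssubset hIS hIne
    have hIH := IH S' hss G' (fun e he => by
        rw [hG', Finset.mem_filter] at he
        exact ⟨he.2, (hG e he.1).2⟩)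
      (fun T hT hTc => by
        obtain ⟨e, heG, heT⟩ := hcov T (hT.trans (Finset.sdiff_subset)) hTc
        exact ⟨e, Finset.mem_filter.mpr ⟨heG, heT.trans hT⟩, heT⟩)
    -- arithmetic
    have htS : S'.card = S.card - I.card := by
      rw [hS']; exact Finset.card_sdiff_of_subset hIS
    have hkS : I.card ≤ S.card := Finset.card_le_card hIS
    set a : ℤ := (S.card : ℤ)
    set k : ℤ := (I.card : ℤ)
    set t : ℤ := (S'.card : ℤ)
    have ht : t = a - k := by
      simp only [t, a, k, htS]
      have : ((S.card - I.card : ℕ) : ℤ) = (S.card : ℤ) - I.card :=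
        Int.ofNat_sub hkS
      rw [this]
    have hk1 : 1 ≤ k := by
      simp only [k]
      exact_mod_cast hIne.card_pos
    have hkq : k ≤ (q : ℤ) - 1 := by
      simp only [k]
      omega
    have hq2 : (2 : ℤ) ≤ (q : ℤ) := by exact_mod_cast hq
    have ha0 : 0 ≤ a := Int.ofNat_nonneg _
    have ht0 : 0 ≤ t := Int.ofNat_nonneg _
    have hG''0 : (S'.card : ℤ) ≤ (G''.card : ℤ) := by exact_mod_cast hcard1
    have hGsum : (G'.card : ℤ) + (G''.card : ℤ) = (G.card : ℤ) := by
      exact_mod_cast hsplit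
    -- hIH : t * (t - q + 1) ≤ 2 * (q - 1) * G'.card
    rcases le_or_gt (a - (q : ℤ) + 1) 0 with hcase | hcase
    · have h1 : a * (a - q + 1) ≤ 0 := mul_nonpos_of_nonneg_of_nonpos ha0 hcase
      have h2 : (0 : ℤ) ≤ 2 * ((q : ℤ) - 1) * G.card := by
        have hg : (0:ℤ) ≤ (G.card : ℤ) := Int.ofNat_nonneg _
        nlinarith
      linarith
    · have htlb : a - (q : ℤ) + 1 ≤ t := by omega
      nlinarith [mul_nonneg (by omega : (0:ℤ) ≤ t - (a - q + 1))
          (by omega : (0:ℤ) ≤ t + q - 1),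
        mul_nonneg (by omega : (0:ℤ) ≤ a - q + 1)
          (by omega : (0:ℤ) ≤ t + q - 1 - a),
        mul_le_mul_of_nonneg_left hG''0 (by omega : (0:ℤ) ≤ 2 * ((q:ℤ) - 1))]

/-- A maximal `q`-uniform linear hypergraph on an `n`-element vertex set
(with `2 ≤ q ≤ n`) has at least `n(n-q+1)/(q(q-1)^2)` edges. -/
theorem stmt_1 {α : Type*} [Fintype α] [DecidableEq α] {n q : ℕ}
    (hq : 2 ≤ q) (hqn : q ≤ n)
    (hn : Fintype.card α = n) (H : Finset (Finset α))
    (huniform : ∀ e ∈ H, e.card = q)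
    (hlinear : ∀ e ∈ H, ∀ f ∈ H, e ≠ f → (e ∩ f).card ≤ 1)
    (hmax : ¬ ∃ e : Finset α, e ∉ H ∧ e.card = q ∧ ∀ A ∈ H, (e ∩ A).card ≤ 1) :
    ((n : ℝ) * ((n : ℝ) - (q : ℝ) + 1)) / ((q : ℝ) * ((q : ℝ) - 1) ^ 2)
      ≤ (H.card : ℝ) := by
  classical
  push_neg at hmax
  -- The set of covered pairs
  set C : Finset (Finset α) := H.biUnion (fun A => A.powersetCard 2) with hC
  have hCmem : ∀ e ∈ C, e ⊆ (Finset.univ : Finset α) ∧ e.card = 2 := by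
    intro e he
    rw [hC, Finset.mem_biUnion] at he
    obtain ⟨A, _, heA⟩ := he
    rw [Finset.mem_powersetCard] at heA
    exact ⟨Finset.subset_univ _, heA.2⟩
  have hCcov : ∀ T ⊆ (Finset.univ : Finset α), T.card = q →
      ∃ e ∈ C, e ⊆ T := by
    intro T _ hTc
    by_cases hTH : T ∈ H
    · obtain ⟨e, heT, hec⟩ := Finset.exists_subset_card_eq
        (show 2 ≤ T.card by omega)
      exact ⟨e, Finset.mem_biUnion.mpr ⟨T, hTH,
        Finset.mem_powersetCard.mpr ⟨heT, hec⟩⟩, heT⟩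
    · obtain ⟨A, hAH, hAcard⟩ := hmax T hTH hTc
      obtain ⟨e, heTA, hec⟩ := Finset.exists_subset_card_eq
        (show 2 ≤ (T ∩ A).card by omega)
      refine ⟨e, Finset.mem_biUnion.mpr ⟨A, hAH,
        Finset.mem_powersetCard.mpr ⟨heTA.trans (Finset.inter_subset_right), hec⟩⟩,
        heTA.trans (Finset.inter_subset_left)⟩
  have hcore := core_bound q hq Finset.univ C hCmem hCcov
  rw [show (Finset.univ : Finset α).card = n from hn] at hcore
  -- bound |C| ≤ |H| * choose q 2
  have hCcard : C.card ≤ H.card * Nat.choose q 2 := by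
    calc C.card ≤ ∑ A ∈ H, (A.powersetCard 2).card := Finset.card_biUnion_le
    _ = ∑ A ∈ H, Nat.choose q 2 := by
        apply Finset.sum_congr rfl
        intro A hA
        rw [Finset.card_powersetCard, huniform A hA]
    _ = H.card * Nat.choose q 2 := by rw [Finset.sum_const, smul_eq_mul]
  -- 2 * choose q 2 = q * (q - 1)
  have hchoose : 2 * Nat.choose q 2 = q * (q - 1) := by
    rw [Nat.choose_two_right]
    have he : 2 ∣ q * (q - 1) := by
      rcases Nat.even_or_odd q with h | h
      · exact Dvd.dvd.mul_right h.two_dvd _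
      · exact Dvd.dvd.mul_left (Nat.Odd.sub_odd h odd_one).two_dvd _
    omega
  -- combine into an integer inequality
  have hZ : (n : ℤ) * ((n : ℤ) - q + 1) ≤ (q : ℤ) * ((q : ℤ) - 1) ^ 2 * H.card := by
    have h1 : (C.card : ℤ) ≤ (H.card : ℤ) * Nat.choose q 2 := by exact_mod_cast hCcard
    have h2 : 2 * ((Nat.choose q 2 : ℕ) : ℤ) = (q : ℤ) * ((q : ℤ) - 1) := by
      have hq1 : ((q - 1 : ℕ) : ℤ) = (q : ℤ) - 1 := by
        have : 1 ≤ q := by omega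
        exact_mod_cast Int.ofNat_sub this
      have := hchoose
      have h3 : ((2 * Nat.choose q 2 : ℕ) : ℤ) = ((q * (q - 1) : ℕ) : ℤ) := by
        exact_mod_cast congrArg (Nat.cast : ℕ → ℤ) this
      push_cast at h3
      rw [hq1] at h3
      linarith
    have hq2 : (0 : ℤ) ≤ (q : ℤ) - 1 := by
      have : (2 : ℤ) ≤ (q : ℤ) := by exact_mod_cast hq
      omega
    have h3 : 2 * ((q:ℤ) - 1) * (C.card : ℤ)
        ≤ (q:ℤ) * ((q:ℤ) - 1) ^ 2 * (H.card : ℤ) := by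
      calc 2 * ((q:ℤ) - 1) * (C.card : ℤ)
          ≤ 2 * ((q:ℤ) - 1) * ((H.card : ℤ) * (Nat.choose q 2 : ℤ)) := by
            apply mul_le_mul_of_nonneg_left h1 (by linarith)
        _ = ((q:ℤ) - 1) * (H.card : ℤ) * (2 * (Nat.choose q 2 : ℤ)) := by ring
        _ = ((q:ℤ) - 1) * (H.card : ℤ) * ((q:ℤ) * ((q:ℤ) - 1)) := by rw [h2]
        _ = (q:ℤ) * ((q:ℤ) - 1) ^ 2 * (H.card : ℤ) := by ring
    linarith [hcore, h3]
  -- convert to reals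
  have hpos : (0 : ℝ) < (q : ℝ) * ((q : ℝ) - 1) ^ 2 := by
    have h2 : (2 : ℝ) ≤ (q : ℝ) := by exact_mod_cast hq
    nlinarith
  rw [div_le_iff₀ hpos]
  have hR : (n : ℝ) * ((n : ℝ) - q + 1) ≤ (q : ℝ) * ((q : ℝ) - 1) ^ 2 * H.card := by
    exact_mod_cast hZ
  linarith
end

section
/- Let $\mathcal{H}$ be a $q$-uniform linear hypergraph on an $n$-element vertex set with $q^2 \ge 2n$ and $q \ge 1$. Then $q \cdot |\mathcal{H}| \le 2n$. -/
/-!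
Adding the edges one at a time, the `k`-th edge meets the union of the previous ones in at most
`k - 1` vertices, so any `m` edges of `H` cover at least `m q - m(m - 1)/2` of the `n` vertices.
For `m = q + 1` this exceeds `q² / 2 ≥ n`, so `|H| ≤ q`; then `m = |H|` gives
`n ≥ |H| (q + 1) / 2`.
-/

open Finset

namespace Finset

variable {α : Type*} [DecidableEq α]

theorem card_inter_biUnion_id_le {e : Finset α} {S : Finset (Finset α)}
    (h : ∀ f ∈ S, #(e ∩ f) ≤ 1) : #(e ∩ S.biUnion id) ≤ #S :=
  calc #(e ∩ S.biUnion id) = #(S.biUnion (e ∩ ·)) := by rw [inter_biUnion]; rfl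
    _ ≤ ∑ f ∈ S, #(e ∩ f) := card_biUnion_le
    _ ≤ ∑ _f ∈ S, 1 := sum_le_sum h
    _ = #S := card_eq_sum_ones S |>.symm

theorem sum_card_le_card_biUnion_id_add_choose_two {S : Finset (Finset α)}
    (hS : (S : Set (Finset α)).Pairwise fun e f => #(e ∩ f) ≤ 1) :
    ∑ e ∈ S, #e ≤ #(S.biUnion id) + (#S).choose 2 := by
  induction S using Finset.induction_on with
  | empty => simp
  | @insert e S he ih =>
    have hS' : (S : Set (Finset α)).Pairwise fun e f => #(e ∩ f) ≤ 1 :=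
      hS.mono (by simp)
    have hmeet : #(e ∩ S.biUnion id) ≤ #S :=
      card_inter_biUnion_id_le fun f hf =>
        hS (by simp) (by simp [hf]) (by rintro rfl; exact he hf)
    have hunion := card_union_add_card_inter e (S.biUnion id)
    have hchoose : (#S + 1).choose 2 = #S + (#S).choose 2 := by
      simpa using Nat.choose_succ_succ' (#S) 1
    rw [sum_insert he, biUnion_insert, card_insert_of_notMem he, hchoose]
    have hprev := ih hS'
    simp only [id] at hunion ⊢
    omega

end Finset

theorem Nat.two_mul_choose_two (m : ℕ) : 2 * m.choose 2 = m * (m - 1) := by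
  rw [Nat.choose_two_right, Nat.mul_div_cancel' (Nat.even_mul_pred_self m).two_dvd]

theorem stmt_5_general {α : Type*} [Fintype α] [DecidableEq α] {n q : ℕ}
    (hq : 2 * n ≤ q ^ 2)
    (hn : Fintype.card α = n) (H : Finset (Finset α))
    (huniform : ∀ e ∈ H, e.card = q)
    (hlinear : ∀ e ∈ H, ∀ f ∈ H, e ≠ f → (e ∩ f).card ≤ 1) :
    q * H.card ≤ 2 * n := by
  have hpair : (H : Set (Finset α)).Pairwise fun e f => #(e ∩ f) ≤ 1 := hlinear
  have hcover : ∀ S ⊆ H, 2 * (#S * q) ≤ 2 * n + #S * (#S - 1) := by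
    intro S hSH
    have hsum : ∑ e ∈ S, #e = #S * q := sum_const_nat fun e he => huniform e (hSH he)
    have hbonf := sum_card_le_card_biUnion_id_add_choose_two (hpair.mono hSH)
    have hvert : #(S.biUnion id) ≤ n := hn ▸ card_le_univ _
    have := Nat.two_mul_choose_two #S
    omega
  rcases q.eq_zero_or_pos with rfl | hq0
  · simp
  have hm : #H ≤ q := by
    by_contra! h
    obtain ⟨S, hSH, hS⟩ := exists_subset_card_eq (show q + 1 ≤ #H from h)
    have hS_cover := hcover S hSH
    rw [hS, Nat.add_sub_cancel] at hS_cover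
    nlinarith
  have hH_cover := hcover H subset_rfl
  have hpairs : #H * (#H - 1) ≤ #H * q := Nat.mul_le_mul_left _ (by omega)
  nlinarith

/-- A `q`-uniform linear hypergraph on an `n`-element vertex set with `q² ≥ 2n`
and `q ≥ 1` satisfies `q * |H| ≤ 2n`. -/
theorem stmt_5 {α : Type*} [Fintype α] [DecidableEq α] {n q : ℕ}
    (hq : 2 * n ≤ q ^ 2) (hq1 : 1 ≤ q)
    (hn : Fintype.card α = n) (H : Finset (Finset α))
    (huniform : ∀ e ∈ H, e.card = q)
    (hlinear : ∀ e ∈ H, ∀ f ∈ H, e ≠ f → (e ∩ f).card ≤ 1) :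
    q * H.card ≤ 2 * n :=
  stmt_5_general hq hn H huniform hlinear
end

section
/- Let $n, q, j$ be integers with $2 \le q \le n$, $n \ge 3$, and $0 \le j < q$. Let $c > 0$ be any positive real constant, define $p(t) = 1 - q(q-1)t$, $y_j(t) = \binom{n-j}{q-j} p(t)^{\binom{q}{2} - \binom{j}{2}}$, $h(t) = \binom{n}{q} p(t)^{\binom{q}{2}}$, and for each $0 \le m < q$ define $\epsilon_m(t) = \binom{n-m}{q-m}\, c\, p(t)^{-\binom{m}{2} - 2\binom{q}{2}}$ (integer power of the positive real $p(t)$). Then for every real $t$ with $p(t) > 0$, $\binom{q}{2} \frac{y_j(t)\, \epsilon_2(t)}{h(t)} = \frac{\binom{q}{2}}{\binom{j}{2} + 2\binom{q}{2}} \cdot \frac{\epsilon_j'(t)}{n(n-1)} \le \frac{1}{2} \cdot \frac{\epsilon_j'(t)}{n(n-1)}$, where $\epsilon_j'$ denotes the derivative of $\epsilon_j$. -/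
/-!
Write `Q = C(q,2)`, `J = C(j,2)`. Differentiating,
`ε_j' = C(n-j,q-j) c (J + 2Q) q(q-1) p^(-(J+2Q)-1)`, while on the left the powers of `p` combine
to the same `p^(-(J+2Q)-1)`; the binomial prefactors then agree because of
`C(n-2,q-2) / C(n,q) = q(q-1) / (n(n-1))`. The inequality is `Q / (J + 2Q) ≤ 1/2`
together with `ε_j' ≥ 0`.
-/

theorem cast_choose_sub_two_div_choose {K : Type*} [Field K] [CharZero K] {n k : ℕ}
    (hk : 2 ≤ k) (hkn : k ≤ n) :
    ((n - 2).choose (k - 2) : K) / n.choose k = k * (k - 1) / (n * (n - 1)) := by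
  have hnn : (n : K) * (n - 1) ≠ 0 :=
    mul_ne_zero (Nat.cast_ne_zero.2 (by omega)) (sub_ne_zero.2 (Nat.cast_ne_one.2 (by omega)))
  rw [div_eq_div_iff (by exact_mod_cast (Nat.choose_pos hkn).ne') hnn]
  have h := congrArg (Nat.cast : ℕ → K) (Nat.choose_mul (n := n) hk)
  push_cast [Nat.cast_choose_two] at h
  field_simp at h
  linear_combination -h

theorem pow_sub_mul_zpow_neg_div_pow {G₀ : Type*} [GroupWithZero G₀] {x : G₀} (hx : x ≠ 0)
    {m n : ℕ} (hmn : m ≤ n) (k : ℤ) :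
    x ^ (n - m) * x ^ (-k) / x ^ n = x ^ (-(m + k)) := by
  rw [← zpow_natCast, ← zpow_natCast, div_eq_mul_inv, ← zpow_neg, ← zpow_add₀ hx,
    ← zpow_add₀ hx]
  congr 1
  push_cast [hmn]
  ring

theorem div_add_two_mul_le_half {x y : ℝ} (hx : 0 ≤ x) (hy : 0 ≤ y) : y / (x + 2 * y) ≤ 1 / 2 :=
  div_le_of_le_mul₀ (by positivity) (by norm_num) (by linarith)

theorem hasDerivAt_const_mul_one_sub_mul_zpow_neg {𝕜 : Type*} [NontriviallyNormedField 𝕜]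
    (C b : 𝕜) (a : ℤ) {t : 𝕜}
    (ht : 1 - b * t ≠ 0) :
    HasDerivAt (fun s => C * (1 - b * s) ^ (-a)) (C * (a * b) * (1 - b * t) ^ (-a - 1)) t := by
  have hlin : HasDerivAt (fun s => 1 - b * s) (-b) t := by
    simpa using ((hasDerivAt_id t).const_mul b).const_sub 1
  refine (((hasDerivAt_zpow (-a) _ (Or.inl ht)).comp t hlin).const_mul C).congr_deriv ?_
  push_cast
  ring

theorem stmt_15_general {n q j : ℕ} (hq : 2 ≤ q) (hqn : q ≤ n) (hj : j < q)
    (c : ℝ) (hc : 0 < c)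
    (p yj h : ℝ → ℝ) (ε : ℕ → ℝ → ℝ)
    (hp : p = fun t => 1 - (q : ℝ) * ((q : ℝ) - 1) * t)
    (hyj : yj = fun t => ((n - j).choose (q - j) : ℝ) * p t ^ (q.choose 2 - j.choose 2))
    (hh : h = fun t => (n.choose q : ℝ) * p t ^ q.choose 2)
    (hε : ε = fun m t => ((n - m).choose (q - m) : ℝ) * c *
      p t ^ (-((m.choose 2 : ℤ) + 2 * (q.choose 2 : ℤ)))) :
    ∀ t : ℝ, 0 < p t →
      (q.choose 2 : ℝ) * (yj t * ε 2 t) / h t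
          = (q.choose 2 : ℝ) / ((j.choose 2 : ℝ) + 2 * (q.choose 2 : ℝ))
            * (deriv (ε j) t / ((n : ℝ) * ((n : ℝ) - 1))) ∧
        (q.choose 2 : ℝ) * (yj t * ε 2 t) / h t
          ≤ (1 / 2) * (deriv (ε j) t / ((n : ℝ) * ((n : ℝ) - 1))) := by
  subst hp hyj hh hε
  intro t ht
  simp only [Nat.choose_self, Nat.cast_one] at ht ⊢
  rw [(hasDerivAt_const_mul_one_sub_mul_zpow_neg _ _ _ ht.ne').deriv]
  set P := 1 - (q : ℝ) * ((q : ℝ) - 1) * t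
  refine (and_iff_left_of_imp fun heq => ?_).2 ?_
  · rw [heq]
    refine mul_le_mul_of_nonneg_right (div_add_two_mul_le_half (by positivity) (by positivity)) ?_
    have hq1 : (1 : ℝ) ≤ q := by exact_mod_cast hq.trans' one_le_two
    have hn2 : (2 : ℝ) ≤ n := by exact_mod_cast hq.trans hqn
    have hqq : 0 ≤ (q : ℝ) * (q - 1) := by nlinarith
    have hnn : 0 ≤ (n : ℝ) * (n - 1) := by nlinarith
    positivity
  · have hQ : (0 : ℝ) < q.choose 2 := by exact_mod_cast Nat.choose_pos hq
    calc _ = (q.choose 2 : ℝ) * (n - j).choose (q - j) * c *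
          ((n - 2).choose (q - 2) / n.choose q) *
          (P ^ (q.choose 2 - j.choose 2) * P ^ (-((1 : ℤ) + 2 * (q.choose 2 : ℤ))) /
            P ^ q.choose 2) := by ring
      _ = _ := by
        rw [cast_choose_sub_two_div_choose hq hqn,
          pow_sub_mul_zpow_neg_div_pow ht.ne' (Nat.choose_le_choose 2 hj.le)]
        push_cast
        field_simp
        ring_nf

/-- With `p(t) = 1 - q(q-1)t`, `y_j(t) = C(n-j,q-j) p(t)^(C(q,2)-C(j,2))`,
`h(t) = C(n,q) p(t)^C(q,2)` and `ε_m(t) = C(n-m,q-m) c p(t)^(-(C(m,2)+2C(q,2)))`,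
for every `t` with `p(t) > 0` we have
`C(q,2) y_j(t) ε_2(t) / h(t) = (C(q,2)/(C(j,2)+2C(q,2))) ε_j'(t)/(n(n-1))
  ≤ (1/2) ε_j'(t)/(n(n-1))`. -/
theorem stmt_15 {n q j : ℕ} (hq : 2 ≤ q) (hqn : q ≤ n) (hn3 : 3 ≤ n) (hj : j < q)
    (c : ℝ) (hc : 0 < c)
    (p yj h : ℝ → ℝ) (ε : ℕ → ℝ → ℝ)
    (hp : p = fun t => 1 - (q : ℝ) * ((q : ℝ) - 1) * t)
    (hyj : yj = fun t => ((n - j).choose (q - j) : ℝ) * p t ^ (q.choose 2 - j.choose 2))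
    (hh : h = fun t => (n.choose q : ℝ) * p t ^ q.choose 2)
    (hε : ε = fun m t => ((n - m).choose (q - m) : ℝ) * c *
      p t ^ (-((m.choose 2 : ℤ) + 2 * (q.choose 2 : ℤ)))) :
    ∀ t : ℝ, 0 < p t →
      (q.choose 2 : ℝ) * (yj t * ε 2 t) / h t
          = (q.choose 2 : ℝ) / ((j.choose 2 : ℝ) + 2 * (q.choose 2 : ℝ))
            * (deriv (ε j) t / ((n : ℝ) * ((n : ℝ) - 1))) ∧
        (q.choose 2 : ℝ) * (yj t * ε 2 t) / h t
          ≤ (1 / 2) * (deriv (ε j) t / ((n : ℝ) * ((n : ℝ) - 1))) :=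
  stmt_15_general hq hqn hj c hc p yj h ε hp hyj hh hε
end
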